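/- arXiv:1302.2347 — 5 statements merged into one kernel-verified Lean document; each statement's English description precedes it below -/
import Mathlib

section
/- For each n, let ε_0, ε_1, …, ε_n be independent random signs, each equal to +1 or −1 with probability 1/2, let P_n(x) = Σ_{m=0}^n C(n,m) ε_m cos(mx), let M_n = sup_{0 ≤ x ≤ 2π} |P_n(x)|, and let R_n = Σ_{m=0}^n C(n,m)². Then the probability of the event M_n ≤ 2·√(R_n · ln n) tends to 1 as n → ∞. -/
open MeasureTheory Finset Filter Real

/-- The uniform probability measure on sign vectors, encoded as `Fin (n+1) → Bool`. -/
noncomputable def signs (n : ℕ) : Measure (Fin (n+1) → Bool) :=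
  (PMF.uniformOfFintype (Fin (n+1) → Bool)).toMeasure

/-- The `m`-th random sign: `+1` or `-1`, each with probability `1/2`,
independent across coordinates under `signs n`. -/
noncomputable def eps {n : ℕ} (ω : Fin (n+1) → Bool) (m : Fin (n+1)) : ℝ :=
  if ω m then 1 else -1

/-- The random trigonometric polynomial `P_n(x) = ∑_{m=0}^n C(n,m) ε_m cos (m x)`. -/
noncomputable def P (n : ℕ) (ω : Fin (n+1) → Bool) (x : ℝ) : ℝ :=
  ∑ m : Fin (n+1), (n.choose m : ℝ) * eps ω m * Real.cos (m * x)

/-- `M_n = sup_{0 ≤ x ≤ 2π} |P_n(x)|`. -/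
noncomputable def M (n : ℕ) (ω : Fin (n+1) → Bool) : ℝ :=
  ⨆ x : Set.Icc (0:ℝ) (2*π), |P n ω x|

/-- `R_n = ∑_{m=0}^n C(n,m)²`. -/
noncomputable def R (n : ℕ) : ℝ :=
  ∑ m ∈ range (n+1), (n.choose m : ℝ)^2

open ProbabilityTheory
open scoped NNReal

/-!
At a fixed point `x`, `P_n(x) = ∑ C(n,m) cos(mx) ε_m` is a Rademacher sum whose variance proxy is
at most `R_n`, so Hoeffding's inequality gives `P(|P_n(x)| ≥ t) ≤ 2 exp(-t² / (2 R_n))`.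
Each `P_n` is `n 2ⁿ`-Lipschitz and `4ⁿ ≤ 2 n R_n`, so on a grid of about `n^{3/2}` equally spaced
points the discretisation error is `O(√R_n)`, eventually below `√(R_n log n) / 5`.
A union bound over the grid with `t = (9/5) √(R_n log n)` then bounds the failure probability by
`O(n^{3/2} n^{-81/50}) → 0`.
-/

lemma PMF.toMeasure_uniformOfFintype_pi {ι α : Type*} [Fintype ι] [DecidableEq ι] [Fintype α]
    [Nonempty α] [MeasurableSpace α] [MeasurableSingletonClass α] :
    (PMF.uniformOfFintype (ι → α)).toMeasure
      = Measure.pi fun _ : ι => (PMF.uniformOfFintype α).toMeasure := by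
  refine Measure.ext_of_singleton fun ω => ?_
  rw [Measure.pi_singleton, PMF.toMeasure_apply_singleton _ _ (measurableSet_singleton _)]
  simp_rw [PMF.toMeasure_apply_singleton _ _ (measurableSet_singleton _),
    PMF.uniformOfFintype_apply, Fintype.card_fun, prod_const, card_univ]
  push_cast
  rw [ENNReal.inv_pow]

lemma hasSubgaussianMGF_mul_sign (a : ℝ) :
    HasSubgaussianMGF (fun b : Bool => a * if b then 1 else -1) (‖a‖₊ ^ 2)
      (PMF.uniformOfFintype Bool).toMeasure := by
  have h := hasSubgaussianMGF_of_mem_Icc_of_integral_eq_zero (a := -|a|) (b := |a|)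
    (X := fun b : Bool => a * if b then 1 else -1)
    (μ := (PMF.uniformOfFintype Bool).toMeasure) (Measurable.of_discrete).aemeasurable
    (ae_of_all _ fun b => ?_) ?_
  · convert h using 1
    ext
    simp [← two_mul, Real.norm_eq_abs]
  · cases b <;> simp [neg_abs_le, neg_le_abs, le_abs_self]
  · rw [PMF.integral_eq_sum]
    simp

lemma ProbabilityTheory.HasSubgaussianMGF.mono {Ω : Type*} [MeasurableSpace Ω] {X : Ω → ℝ}
    {μ : Measure Ω} {c c' : ℝ≥0} (h : HasSubgaussianMGF X c μ) (hc : c ≤ c') :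
    HasSubgaussianMGF X c' μ :=
  ⟨h.integrable_exp_mul, fun t => (h.mgf_le t).trans (exp_le_exp.mpr (by gcongr))⟩

lemma measureReal_le_abs_sum_mul_sign_le {ι : Type*} [Fintype ι] [DecidableEq ι] (a : ι → ℝ)
    {t V : ℝ} (ht : 0 ≤ t) (hV : ∑ i, a i ^ 2 ≤ V) :
    (PMF.uniformOfFintype (ι → Bool)).toMeasure.real
        {ω | t ≤ |∑ i, a i * if ω i then 1 else -1|}
      ≤ 2 * exp (-t ^ 2 / (2 * V)) := by
  rw [PMF.toMeasure_uniformOfFintype_pi]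
  set μ := Measure.pi fun _ : ι => (PMF.uniformOfFintype Bool).toMeasure
  set X : ι → (ι → Bool) → ℝ := fun i ω => a i * if ω i then 1 else -1
  have hindep : iIndepFun X μ :=
    iIndepFun_pi (X := fun i (b : Bool) => a i * if b then 1 else -1)
      fun _ => Measurable.of_discrete.aemeasurable
  have hsub : ∀ i, HasSubgaussianMGF (X i) (‖a i‖₊ ^ 2) μ := fun i =>
    HasSubgaussianMGF.of_map (X := fun b : Bool => a i * if b then 1 else -1)
      (measurable_pi_apply i).aemeasurable
      (by rw [(measurePreserving_eval _ i).map_eq]; exact hasSubgaussianMGF_mul_sign (a i))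
  have hV' : ∑ i, ‖a i‖₊ ^ 2 ≤ V.toNNReal := by
    rw [← NNReal.coe_le_coe, Real.coe_toNNReal _ ((sum_nonneg fun i _ => sq_nonneg _).trans hV)]
    push_cast
    simpa [sq_abs] using hV
  have hsum (Y : ι → (ι → Bool) → ℝ) (hY : iIndepFun Y μ)
      (hYsub : ∀ i, HasSubgaussianMGF (Y i) (‖a i‖₊ ^ 2) μ) :
      μ.real {ω | t ≤ ∑ i, Y i ω} ≤ exp (-t ^ 2 / (2 * V)) := by
    have := ((HasSubgaussianMGF.sum_of_iIndepFun hY (s := univ) fun i _ => hYsub i).mono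
      hV').measure_ge_le ht
    rwa [Real.coe_toNNReal _ ((sum_nonneg fun i _ => sq_nonneg _).trans hV)] at this
  have hpos := hsum X hindep hsub
  have hneg := hsum (fun i ω => -X i ω)
    (hindep.comp (fun _ => Neg.neg) fun _ => measurable_neg) fun i => (hsub i).neg
  calc μ.real {ω | t ≤ |∑ i, X i ω|}
      ≤ μ.real ({ω | t ≤ ∑ i, X i ω} ∪ {ω | t ≤ ∑ i, -X i ω}) := by
        refine measureReal_mono fun ω hω => ?_
        rw [Set.mem_union, Set.mem_ofPred_eq, Set.mem_ofPred_eq, sum_neg_distrib]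
        exact le_abs.mp hω
    _ ≤ _ := (measureReal_union_le _ _).trans (by linarith)

lemma exists_mem_range_abs_sub_mul_div_le {T : ℝ} (hT : 0 < T) {N : ℕ} (hN : 0 < N) {x : ℝ}
    (hx : x ∈ Set.Icc 0 T) : ∃ j ∈ range (N + 1), |x - T * j / N| ≤ T / N := by
  have hN' : (0 : ℝ) < N := by exact_mod_cast hN
  set j := ⌊x * N / T⌋₊
  have hj : (j : ℝ) ≤ x * N / T := Nat.floor_le (by have := hx.1; positivity)
  have hj' : x * N / T < j + 1 := Nat.lt_floor_add_one _
  refine ⟨j, mem_range_succ_iff.mpr (Nat.floor_le_of_le ?_), abs_le.mpr ⟨?_, ?_⟩⟩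
  · rw [div_le_iff₀ hT]; nlinarith [hx.2]
  · have : T * j / N ≤ x := by
      rw [div_le_iff₀ hN']; rw [le_div_iff₀ hT] at hj; linarith
    linarith [div_pos hT hN']
  · have : x ≤ T * j / N + T / N := by
      rw [← add_div, le_div_iff₀ hN']; rw [div_lt_iff₀ hT] at hj'; linarith
    linarith

lemma ciSup_Icc_abs_le_of_grid {f : ℝ → ℝ} {L T c : ℝ} (hL : 0 ≤ L) (hT : 0 < T)
    (hf : ∀ x y, |f x - f y| ≤ L * |x - y|) {N : ℕ} (hN : 0 < N)
    (hgrid : ∀ j ∈ range (N + 1), |f (T * j / N)| ≤ c) :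
    ⨆ x : Set.Icc 0 T, |f x| ≤ c + L * T / N := by
  have : Nonempty (Set.Icc 0 T) := ⟨⟨0, le_rfl, hT.le⟩⟩
  refine ciSup_le fun ⟨x, hx⟩ => ?_
  obtain ⟨j, hj, hxj⟩ := exists_mem_range_abs_sub_mul_div_le hT hN hx
  have hfx : |f x - f (T * j / N)| ≤ L * (T / N) :=
    (hf _ _).trans (mul_le_mul_of_nonneg_left hxj hL)
  show |f x| ≤ c + L * T / N
  linarith [abs_sub_abs_le_abs_sub (f x) (f (T * j / N)), hgrid j hj, mul_div_assoc L T N]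

lemma R_eq_centralBinom (n : ℕ) : R n = n.centralBinom := by
  rw [R, Nat.centralBinom_eq_two_mul_choose, ← Nat.sum_range_choose_sq]
  push_cast
  rfl

lemma R_pos (n : ℕ) : 0 < R n := by
  rw [R_eq_centralBinom]; exact_mod_cast n.centralBinom_pos

lemma four_pow_le_two_mul_R {n : ℕ} (hn : 0 < n) : (4 : ℝ) ^ n ≤ 2 * n * R n := by
  rw [R_eq_centralBinom]
  exact_mod_cast Nat.four_pow_le_two_mul_self_mul_centralBinom n hn

lemma abs_P_sub_P_le (n : ℕ) (ω : Fin (n+1) → Bool) (x y : ℝ) :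
    |P n ω x - P n ω y| ≤ n * 2 ^ n * |x - y| := by
  have hchoose : ∑ m : Fin (n+1), (n.choose m : ℝ) = 2 ^ n := by
    rw [Fin.sum_univ_eq_sum_range (fun m => (n.choose m : ℝ)), ← Nat.cast_sum,
      Nat.sum_range_choose]
    push_cast; rfl
  calc |P n ω x - P n ω y|
      = |∑ m : Fin (n+1), (n.choose m : ℝ) * eps ω m * (cos (m * x) - cos (m * y))| := by
        simp only [P, ← sum_sub_distrib, mul_sub]
    _ ≤ ∑ m : Fin (n+1), (n.choose m : ℝ) * (n * |x - y|) := by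
        refine (abs_sum_le_sum_abs _ _).trans (sum_le_sum fun m _ => ?_)
        have heps : |eps ω m| = 1 := by unfold eps; split <;> simp
        have hm : (m : ℝ) ≤ n := by exact_mod_cast Nat.lt_succ_iff.mp m.isLt
        rw [abs_mul, abs_mul, heps, mul_one, Nat.abs_cast]
        gcongr
        calc |cos (m * x) - cos (m * y)| ≤ |m * x - m * y| := abs_cos_sub_cos_le _ _
          _ = m * |x - y| := by rw [← mul_sub, abs_mul, Nat.abs_cast]
          _ ≤ n * |x - y| := by gcongr
    _ = n * 2 ^ n * |x - y| := by rw [← sum_mul, hchoose]; ring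

instance isProbabilityMeasure_signs (n : ℕ) : IsProbabilityMeasure (signs n) :=
  PMF.toMeasure.isProbabilityMeasure _

lemma measureReal_le_abs_P_le (n : ℕ) (x : ℝ) {t : ℝ} (ht : 0 ≤ t) :
    (signs n).real {ω | t ≤ |P n ω x|} ≤ 2 * exp (-t ^ 2 / (2 * R n)) := by
  have hP : ∀ ω, P n ω x
      = ∑ m : Fin (n+1), (n.choose m * cos (m * x)) * if ω m then 1 else -1 :=
    fun ω => sum_congr rfl fun m _ => by rw [eps]; ring
  simp_rw [hP]
  refine measureReal_le_abs_sum_mul_sign_le _ ht ?_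
  rw [R, ← Fin.sum_univ_eq_sum_range (fun m => (n.choose m : ℝ) ^ 2)]
  refine sum_le_sum fun m _ => ?_
  rw [mul_pow]
  exact mul_le_of_le_one_right (sq_nonneg _) (cos_sq_le_one _)

lemma measureReal_lt_M_le (n : ℕ) {N : ℕ} (hN : 0 < N) {t : ℝ} (ht : 0 ≤ t) :
    (signs n).real {ω | t + n * 2 ^ n * (2 * π) / N < M n ω}
      ≤ (N + 1) * (2 * exp (-t ^ 2 / (2 * R n))) := by
  have hsub : {ω | t + n * 2 ^ n * (2 * π) / N < M n ω}
      ⊆ ⋃ j ∈ range (N + 1), {ω | t ≤ |P n ω (2 * π * j / N)|} := by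
    intro ω hω
    by_contra hnot
    simp only [Set.mem_iUnion, Set.mem_ofPred_eq, not_exists, not_le] at hnot
    exact not_le.mpr hω <| ciSup_Icc_abs_le_of_grid (by positivity) two_pi_pos
      (abs_P_sub_P_le n ω) hN fun j hj => (hnot j hj).le
  calc (signs n).real {ω | t + n * 2 ^ n * (2 * π) / N < M n ω}
      ≤ ∑ j ∈ range (N + 1), (signs n).real {ω | t ≤ |P n ω (2 * π * j / N)|} :=
        (measureReal_mono hsub (measure_ne_top _ _)).trans (measureReal_biUnion_finset_le _ _)
    _ ≤ ∑ j ∈ range (N + 1), 2 * exp (-t ^ 2 / (2 * R n)) :=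
        sum_le_sum fun j _ => measureReal_le_abs_P_le n _ ht
    _ = (N + 1) * (2 * exp (-t ^ 2 / (2 * R n))) := by
        rw [sum_const, card_range, nsmul_eq_mul]; push_cast; ring

lemma mesh_error_le_sqrt_R_mul_log {n : ℕ} (hn : 0 < n) {N : ℝ} (hN : n * √n ≤ N)
    (hlog : 200 * π ^ 2 ≤ log n) :
    n * 2 ^ n * (2 * π) / N ≤ √(R n * log n) / 5 := by
  have hn' : (0 : ℝ) < n := by exact_mod_cast hn
  have hmesh : n * 2 ^ n * (2 * π) / N ≤ 2 * π * 2 ^ n / √n :=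
    calc n * 2 ^ n * (2 * π) / N ≤ n * 2 ^ n * (2 * π) / (n * √n) := by gcongr
      _ = 2 * π * 2 ^ n / √n := by field_simp
  have hsq : (5 * (2 * π * 2 ^ n / √n)) ^ 2 ≤ R n * log n := by
    have h4 := four_pow_le_two_mul_R hn
    have h2 : ((2 : ℝ) ^ n) ^ 2 = 4 ^ n := by rw [← pow_mul, mul_comm, pow_mul]; norm_num
    rw [mul_pow, div_pow, sq_sqrt hn'.le, mul_div_assoc', div_le_iff₀ hn', mul_pow, h2]
    nlinarith [mul_le_mul_of_nonneg_left h4 (sq_nonneg π),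
      mul_le_mul_of_nonneg_left hlog (mul_nonneg hn'.le (R_pos n).le)]
  have := (le_abs_self _).trans (abs_le_sqrt hsq)
  linarith

lemma measureReal_two_sqrt_lt_M_le {n : ℕ} (hn : 0 < n) (hlog : 200 * π ^ 2 ≤ log n) :
    (signs n).real {ω | 2 * √(R n * log n) < M n ω} ≤ 6 * exp (-(3 / 25) * log n) := by
  have hn' : (0 : ℝ) < n := by exact_mod_cast hn
  have hlog0 : 0 ≤ log n := (by positivity : (0 : ℝ) ≤ 200 * π ^ 2).trans hlog
  set N := ⌈n * √n⌉₊
  have hN : (n * √n : ℝ) ≤ N := Nat.le_ceil _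
  have hNpos : 0 < N := Nat.ceil_pos.mpr (by positivity)
  have hN3 : (N : ℝ) + 1 ≤ 3 * exp ((3 / 2) * log n) := by
    have hexp : exp ((3 / 2) * log n) = n * √n := by
      rw [show (3 / 2) * log n = log n + log √n by rw [log_sqrt hn'.le]; ring, exp_add,
        exp_log hn', exp_log (sqrt_pos.mpr hn')]
    have hn1 : (1 : ℝ) ≤ n := by exact_mod_cast hn
    have h1 : (1 : ℝ) ≤ n * √n := one_le_mul_of_one_le_of_one_le hn1 (one_le_sqrt.mpr hn1)
    linarith [Nat.ceil_lt_add_one (by positivity : (0 : ℝ) ≤ n * √n)]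
  set t := 9 / 5 * √(R n * log n) with ht_def
  have ht : 0 ≤ t := by positivity
  have hexp : -t ^ 2 / (2 * R n) = -(81 / 50) * log n := by
    rw [mul_pow, sq_sqrt (mul_nonneg (R_pos n).le hlog0)]
    field_simp [(R_pos n).ne']
    ring
  have hmesh : t + n * 2 ^ n * (2 * π) / N ≤ 2 * √(R n * log n) := by
    linarith [mesh_error_le_sqrt_R_mul_log hn hN hlog]
  calc (signs n).real {ω | 2 * √(R n * log n) < M n ω}
      ≤ (signs n).real {ω | t + n * 2 ^ n * (2 * π) / N < M n ω} :=
        measureReal_mono fun ω hω => hmesh.trans_lt hω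
    _ ≤ (N + 1) * (2 * exp (-t ^ 2 / (2 * R n))) := measureReal_lt_M_le n hNpos ht
    _ ≤ 3 * exp ((3 / 2) * log n) * (2 * exp (-(81 / 50) * log n)) := by rw [hexp]; gcongr
    _ = 6 * exp (-(3 / 25) * log n) := by rw [mul_mul_mul_comm, ← exp_add]; ring_nf

theorem stmt1 :
    Tendsto
      (fun n : ℕ =>
        signs n {ω | M n ω ≤ 2 * Real.sqrt (R n * Real.log n)})
      atTop (nhds 1) := by
  have hlog : Tendsto (fun n : ℕ => log n) atTop atTop :=
    tendsto_log_atTop.comp tendsto_natCast_atTop_atTop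
  have hbound : Tendsto (fun n : ℕ => 6 * exp (-(3 / 25) * log n)) atTop (nhds 0) := by
    have hexp := tendsto_exp_atBot.comp
      (hlog.const_mul_atTop_of_neg (by norm_num : -(3 / 25 : ℝ) < 0))
    simpa using hexp.const_mul 6
  have hbad : Tendsto (fun n : ℕ => (signs n).real {ω | 2 * √(R n * log n) < M n ω})
      atTop (nhds 0) := by
    refine squeeze_zero' (.of_forall fun n => measureReal_nonneg) ?_ hbound
    filter_upwards [eventually_gt_atTop 0, hlog.eventually_ge_atTop (200 * π ^ 2)] with n hn hlogn
    exact measureReal_two_sqrt_lt_M_le hn hlogn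
  have hcompl : ∀ n : ℕ, signs n {ω | M n ω ≤ 2 * √(R n * log n)}
      = ENNReal.ofReal (1 - (signs n).real {ω | 2 * √(R n * log n) < M n ω}) := by
    intro n
    rw [← probReal_compl_eq_one_sub .of_discrete, ofReal_measureReal]
    congr
    ext
    simp [not_lt]
  simp_rw [hcompl]
  simpa using ENNReal.tendsto_ofReal (hbad.const_sub 1)
end

section
/- Let ε_1, …, ε_{n+1} be independent random signs, each equal to +1 or −1 with probability 1/2, let c_0, …, c_n be real constants, let f = Σ_{m=0}^n c_m ε_{m+1}, let C = Σ_{m=0}^n c_m², and let D = Σ_{m=0}^n c_m⁴. Then for any real number λ, the expectation E[e^{λ f}] satisfies E[e^{λ f}] ≥ e^{(1/2)λ²C − λ⁴D}. -/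
/-!
The expectation factorises over the independent signs: `E[exp (λ f)] = ∏ₘ cosh (λ cₘ)`.
It then suffices to prove the scalar inequality `exp (x²/2 - x⁴) ≤ cosh x` and multiply.
With `a = x²/2` this follows from `cosh x ≥ 1 + a`, `exp t ≤ (1 - t)⁻¹` for `t < 1`,
and `(1 + a) (1 - a + 4a²) = 1 + 3a² + 4a³ ≥ 1`.
-/

open MeasureTheory Finset Real

namespace Real

lemma sq_le_sinh_sq (x : ℝ) : x ^ 2 ≤ sinh x ^ 2 := by
  rw [← sq_abs (sinh x), abs_sinh, ← sq_abs x]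
  exact pow_le_pow_left₀ (abs_nonneg x) (self_le_sinh_iff.2 (abs_nonneg x)) 2

lemma one_add_sq_div_two_le_cosh (x : ℝ) : 1 + x ^ 2 / 2 ≤ cosh x := by
  have hcosh := cosh_two_mul (x / 2)
  rw [show 2 * (x / 2) = x by ring, cosh_sq] at hcosh
  nlinarith [sq_le_sinh_sq (x / 2)]

lemma exp_le_inv_one_sub {t : ℝ} (ht : t < 1) : exp t ≤ (1 - t)⁻¹ := by
  rw [le_inv_comm₀ (exp_pos t) (sub_pos.2 ht), ← exp_neg]
  exact one_sub_le_exp_neg t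

lemma exp_sq_div_two_sub_pow_four_le_cosh (x : ℝ) : exp (x ^ 2 / 2 - x ^ 4) ≤ cosh x := by
  have hpos : 0 < 1 - (x ^ 2 / 2 - x ^ 4) := by nlinarith [sq_nonneg (4 * x ^ 2 - 1)]
  calc exp (x ^ 2 / 2 - x ^ 4) ≤ (1 - (x ^ 2 / 2 - x ^ 4))⁻¹ := exp_le_inv_one_sub (by linarith)
    _ ≤ 1 + x ^ 2 / 2 := by
      rw [inv_le_iff_one_le_mul₀ hpos]
      nlinarith [pow_nonneg (sq_nonneg x) 2, pow_nonneg (sq_nonneg x) 3]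
    _ ≤ cosh x := one_add_sq_div_two_le_cosh x

end Real

lemma integral_prod_uniform_bool {ι : Type*} [Fintype ι] [DecidableEq ι] (f : ι → Bool → ℝ) :
    ∫ ω, ∏ i, f i (ω i) ∂(PMF.uniformOfFintype (ι → Bool)).toMeasure
      = ∏ i, (f i true + f i false) / 2 := by
  simp only [PMF.integral_eq_sum, PMF.uniformOfFintype_apply, Fintype.card_fun, Fintype.card_bool,
    smul_eq_mul, ← Finset.mul_sum, ← Fintype.prod_sum, Fintype.sum_bool, Finset.prod_div_distrib]
  simp [div_eq_inv_mul]

lemma integral_exp_sum_mul_eps (n : ℕ) (a : Fin (n+1) → ℝ) :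
    ∫ ω, exp (∑ m, a m * eps ω m) ∂(signs n) = ∏ m, cosh (a m) := by
  simp only [exp_sum, eps]
  rw [signs, integral_prod_uniform_bool (fun m b ↦ exp (a m * if b then 1 else -1))]
  simp [cosh_eq]

theorem stmt6 (n : ℕ) (c : ℕ → ℝ) (l : ℝ) :
    (∫ ω, Real.exp (l * ∑ m : Fin (n+1), c m * eps ω m) ∂(signs n))
      ≥ Real.exp (1/2 * l^2 * (∑ m ∈ range (n+1), (c m)^2) - l^4 * ∑ m ∈ range (n+1), (c m)^4) := by
  have hexponent : 1/2 * l^2 * (∑ m ∈ range (n+1), (c m)^2) - l^4 * ∑ m ∈ range (n+1), (c m)^4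
      = ∑ m : Fin (n+1), ((l * c m) ^ 2 / 2 - (l * c m) ^ 4) := by
    simp only [← Fin.sum_univ_eq_sum_range (fun m ↦ c m ^ 2), ← Fin.sum_univ_eq_sum_range (fun m ↦ c m ^ 4),
      Finset.mul_sum, ← Finset.sum_sub_distrib]
    exact Finset.sum_congr rfl fun m _ ↦ by ring
  rw [hexponent, exp_sum, ge_iff_le]
  simp only [Finset.mul_sum, ← mul_assoc]
  rw [integral_exp_sum_mul_eps]
  exact Finset.prod_le_prod (fun m _ ↦ (exp_pos _).le)
    fun m _ ↦ exp_sq_div_two_sub_pow_four_le_cosh (l * c m)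
end

section
/- Let g(x,y) be a bounded measurable real-valued function on [a,b] × [c,d] with a < b and c < d. Suppose |g(x,y)| ≤ A for all (x,y), where A > 0, and that (∫_c^d ∫_a^b g²(x,y) dx dy) / ((b−a)(d−c)) = B. Then for any positive real number μ, (∫_c^d ∫_a^b e^{μ g(x,y)} dx dy) / ((b−a)(d−c)) ≤ 1 + μ√B + (B/A²) e^{μA}. -/
/-!
For `|s| ≤ M`, comparing the exponential series term by term after its linear part gives
`exp s ≤ 1 + s + (s / M)² exp M`. Apply this with `s = μ g`, `M = μ A` and average over the
rectangle, i.e. integrate against the uniform probability measure on it: the quadratic term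
averages to `B / A² · exp (μ A)`, and the mean of `g` is at most `√B` because the variance of
`g` is nonnegative.
-/

open MeasureTheory Real ProbabilityTheory Set
open scoped Nat ENNReal

namespace Real

theorem hasSum_exp_sub_one_sub (x : ℝ) :
    HasSum (fun n : ℕ => x ^ (n + 2) / (n + 2)!) (exp x - 1 - x) := by
  have h := (hasSum_nat_add_iff' 2).mpr (NormedSpace.expSeries_div_hasSum_exp x)
  rw [← Real.exp_eq_exp_ℝ] at h
  simpa [Finset.sum_range_succ, sub_sub] using h

theorem exp_sub_one_sub_le_of_abs_le {s M : ℝ} (hM : 0 < M) (hs : |s| ≤ M) :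
    exp s - 1 - s ≤ (s / M) ^ 2 * (exp M - 1 - M) := by
  refine hasSum_le (fun n => ?_) (hasSum_exp_sub_one_sub s)
    ((hasSum_exp_sub_one_sub M).mul_left _)
  have hpow : s ^ (n + 2) ≤ s ^ 2 * M ^ n :=
    calc s ^ (n + 2) = s ^ n * s ^ 2 := pow_add s n 2
      _ ≤ |s| ^ n * s ^ 2 :=
        mul_le_mul_of_nonneg_right ((le_abs_self _).trans (abs_pow s n).le) (sq_nonneg s)
      _ ≤ s ^ 2 * M ^ n := by rw [mul_comm]; gcongr
  calc s ^ (n + 2) / (n + 2)! ≤ s ^ 2 * M ^ n / (n + 2)! := by gcongr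
    _ = (s / M) ^ 2 * (M ^ (n + 2) / (n + 2)!) := by field_simp; ring

theorem exp_mul_le_of_abs_le {x A t : ℝ} (hA : 0 < A) (ht : 0 < t) (hx : |x| ≤ A) :
    exp (t * x) ≤ 1 + t * x + x ^ 2 / A ^ 2 * exp (t * A) := by
  have h := exp_sub_one_sub_le_of_abs_le (s := t * x) (mul_pos ht hA)
    (by rw [abs_mul, abs_of_pos ht]; gcongr)
  rw [mul_div_mul_left _ _ ht.ne', div_pow] at h
  have hcoef : 0 ≤ x ^ 2 / A ^ 2 := by positivity
  nlinarith [mul_nonneg hcoef (by positivity : 0 ≤ 1 + t * A)]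

theorem exp_mul_le_exp_mul_of_abs_le {x A t : ℝ} (ht : 0 ≤ t) (hx : |x| ≤ A) :
    exp (t * x) ≤ exp (t * A) :=
  exp_le_exp.2 (mul_le_mul_of_nonneg_left ((le_abs_self x).trans hx) ht)

end Real

namespace ProbabilityTheory

theorem integral_cond_eq {Ω E : Type*} [MeasurableSpace Ω] [NormedAddCommGroup E]
    [NormedSpace ℝ E] (μ : Measure Ω) (s : Set Ω) (f : Ω → E) :
    ∫ x, f x ∂μ[|s] = (μ.real s)⁻¹ • ∫ x in s, f x ∂μ := by
  rw [ProbabilityTheory.cond, integral_smul_measure, ENNReal.toReal_inv, measureReal_def]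

variable {Ω : Type*} [MeasurableSpace Ω] {P : Measure Ω} [IsProbabilityMeasure P]

theorem integral_le_sqrt_integral_sq {X : Ω → ℝ} (hX : MemLp X 2 P) :
    ∫ ω, X ω ∂P ≤ √(∫ ω, X ω ^ 2 ∂P) := by
  refine le_sqrt_of_sq_le ?_
  have := variance_eq_sub hX ▸ variance_nonneg X P
  simpa using this

theorem integral_exp_mul_le_of_abs_le {X : Ω → ℝ} {A t : ℝ} (hX : AEMeasurable X P)
    (hA : 0 < A) (hXA : ∀ᵐ ω ∂P, |X ω| ≤ A) (ht : 0 < t) :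
    ∫ ω, exp (t * X ω) ∂P
      ≤ 1 + t * √(∫ ω, X ω ^ 2 ∂P) + (∫ ω, X ω ^ 2 ∂P) / A ^ 2 * exp (t * A) := by
  have hL2 : MemLp X 2 P := MemLp.of_bound hX.aestronglyMeasurable A hXA
  have hint : Integrable X P := hL2.integrable one_le_two
  have hsq : Integrable (fun ω => X ω ^ 2) P := hL2.integrable_sq
  have hlin : Integrable (fun ω => 1 + t * X ω) P := (integrable_const 1).add (hint.const_mul t)
  have hquad : Integrable (fun ω => X ω ^ 2 / A ^ 2 * exp (t * A)) P :=
    (hsq.div_const _).mul_const _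
  have hexp : Integrable (fun ω => exp (t * X ω)) P := by
    refine .of_bound (hX.const_mul t).exp.aestronglyMeasurable (exp (t * A)) ?_
    filter_upwards [hXA] with ω hω
    rw [norm_of_nonneg (exp_pos _).le]
    exact exp_mul_le_exp_mul_of_abs_le ht.le hω
  have hbound : ∀ᵐ ω ∂P, exp (t * X ω) ≤ 1 + t * X ω + X ω ^ 2 / A ^ 2 * exp (t * A) := by
    filter_upwards [hXA] with ω hω using exp_mul_le_of_abs_le hA ht hω
  calc ∫ ω, exp (t * X ω) ∂P
      ≤ ∫ ω, 1 + t * X ω + X ω ^ 2 / A ^ 2 * exp (t * A) ∂P :=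
        integral_mono_ae hexp (hlin.add hquad) hbound
    _ = 1 + t * ∫ ω, X ω ∂P + (∫ ω, X ω ^ 2 ∂P) / A ^ 2 * exp (t * A) := by
        rw [integral_add hlin hquad, integral_add (integrable_const 1) (hint.const_mul t),
          integral_const_mul, integral_mul_const, integral_div]
        simp
    _ ≤ _ := by gcongr; exact integral_le_sqrt_integral_sq hL2

end ProbabilityTheory

section Rectangle

variable {a b c d : ℝ}

theorem setIntegral_Ioc_prod_Ioc {E : Type*} [NormedAddCommGroup E] [NormedSpace ℝ E]
    {f : ℝ → ℝ → E} (hab : a ≤ b) (hcd : c ≤ d)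
    (hf : IntegrableOn (Function.uncurry f) (Ioc a b ×ˢ Ioc c d)) :
    ∫ p in Ioc a b ×ˢ Ioc c d, Function.uncurry f p = ∫ y in c..d, ∫ x in a..b, f x y := by
  rw [intervalIntegral.integral_of_le hcd]
  simp_rw [intervalIntegral.integral_of_le hab]
  rw [IntegrableOn, Measure.volume_eq_prod, ← Measure.prod_restrict] at hf
  rw [Measure.volume_eq_prod, ← Measure.prod_restrict]
  exact integral_prod_symm _ hf

theorem volume_real_Ioc_prod_Ioc (hab : a ≤ b) (hcd : c ≤ d) :
    volume.real (Ioc a b ×ˢ Ioc c d) = (b - a) * (d - c) := by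
  simp [Measure.volume_eq_prod, measureReal_def, Measure.prod_prod, ENNReal.toReal_mul, hab, hcd]

theorem isProbabilityMeasure_cond_Ioc_prod_Ioc (hab : a < b) (hcd : c < d) :
    IsProbabilityMeasure (volume[|Ioc a b ×ˢ Ioc c d]) := by
  refine cond_isProbabilityMeasure_of_finite (ENNReal.toReal_pos_iff.mp ?_).1.ne'
    ((Metric.isBounded_Ioc a b).prod (Metric.isBounded_Ioc c d)).measure_lt_top.ne
  rw [← measureReal_def, volume_real_Ioc_prod_Ioc hab.le hcd.le]
  exact mul_pos (sub_pos.2 hab) (sub_pos.2 hcd)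

theorem integrableOn_Ioc_prod_Ioc_of_abs_le {F : ℝ × ℝ → ℝ} {C : ℝ} (hF : Measurable F)
    (hC : ∀ p ∈ Ioc a b ×ˢ Ioc c d, |F p| ≤ C) : IntegrableOn F (Ioc a b ×ˢ Ioc c d) :=
  Measure.integrableOn_of_bounded
    ((Metric.isBounded_Ioc a b).prod (Metric.isBounded_Ioc c d)).measure_lt_top.ne
    hF.aestronglyMeasurable
    (ae_restrict_of_forall_mem (measurableSet_Ioc.prod measurableSet_Ioc) hC)

theorem intervalIntegral_intervalIntegral_div_eq_integral_cond {f : ℝ → ℝ → ℝ}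
    (hab : a ≤ b) (hcd : c ≤ d) (hf : IntegrableOn (Function.uncurry f) (Ioc a b ×ˢ Ioc c d)) :
    (∫ y in c..d, ∫ x in a..b, f x y) / ((b - a) * (d - c))
      = ∫ p, Function.uncurry f p ∂volume[|Ioc a b ×ˢ Ioc c d] := by
  rw [integral_cond_eq, setIntegral_Ioc_prod_Ioc hab hcd hf, volume_real_Ioc_prod_Ioc hab hcd,
    smul_eq_mul, div_eq_inv_mul]

end Rectangle

theorem stmt7 (a b c d A B : ℝ) (hab : a < b) (hcd : c < d)
    (g : ℝ → ℝ → ℝ) (hmeas : Measurable (Function.uncurry g))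
    (hA : 0 < A)
    (hbound : ∀ x ∈ Set.Icc a b, ∀ y ∈ Set.Icc c d, |g x y| ≤ A)
    (hB : (∫ y in c..d, ∫ x in a..b, (g x y)^2) / ((b - a) * (d - c)) = B)
    (μ : ℝ) (hμ : 0 < μ) :
    (∫ y in c..d, ∫ x in a..b, Real.exp (μ * g x y)) / ((b - a) * (d - c))
      ≤ 1 + μ * Real.sqrt B + B / A^2 * Real.exp (μ * A) := by
  have := isProbabilityMeasure_cond_Ioc_prod_Ioc hab hcd
  have hgR : ∀ p ∈ Ioc a b ×ˢ Ioc c d, |Function.uncurry g p| ≤ A := fun p hp =>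
    hbound _ (Ioc_subset_Icc_self hp.1) _ (Ioc_subset_Icc_self hp.2)
  have hsq : IntegrableOn (Function.uncurry fun x y => g x y ^ 2) (Ioc a b ×ˢ Ioc c d) :=
    integrableOn_Ioc_prod_Ioc_of_abs_le (hmeas.pow_const 2) fun p hp =>
      (abs_pow (g p.1 p.2) 2).trans_le (pow_le_pow_left₀ (abs_nonneg _) (hgR p hp) 2)
  have hexp : IntegrableOn (Function.uncurry fun x y => Real.exp (μ * g x y))
      (Ioc a b ×ˢ Ioc c d) :=
    integrableOn_Ioc_prod_Ioc_of_abs_le (hmeas.const_mul μ).exp fun p hp =>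
      (abs_of_pos (exp_pos _)).trans_le (exp_mul_le_exp_mul_of_abs_le hμ.le (hgR p hp))
  rw [intervalIntegral_intervalIntegral_div_eq_integral_cond hab.le hcd.le hsq] at hB
  rw [intervalIntegral_intervalIntegral_div_eq_integral_cond hab.le hcd.le hexp, ← hB]
  exact integral_exp_mul_le_of_abs_le hmeas.aemeasurable hA
    (ae_cond_of_forall_mem (measurableSet_Ioc.prod measurableSet_Ioc) hgR) hμ
end

section
/- Let n ≥ 1 and let P(x) = Σ_{m=0}^n (α_m cos(mx) + β_m sin(mx)) be a real trigonometric polynomial of order n. Let M = max_{x ∈ ℝ} |P(x)|, and let θ be a real number with 0 < θ < 1. Then there exists a closed interval I ⊆ ℝ of length at least (1−θ)/n such that |P(x)| ≥ θM for every x ∈ I. -/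
open Finset Real

/-!
By Bernstein's inequality `|P'| ≤ n M`, so on the interval of length `(1 - θ) / n` starting at a
maximum point of `|P|` the value of `|P|` drops by at most `(1 - θ) M`.

Bernstein's inequality is proved by comparison with a sinusoid. If `P'(ξ) > n M'` for some
`M' > M`, let `S x = M' sin (n (x - c))` be the sinusoid with `S ξ = P ξ` on a rising arch, so that
`P - S` crosses zero at `ξ` with positive slope. `P - S` alternates in sign at the consecutive
extrema `y₀ < y₁ < ⋯ < y₂ₙ = y₀ + 2π` of `S`, which together with the crossing at `ξ ∈ (y₀, y₁)`
yields `2n + 1` zeros of `P - S` in `(y₀, y₀ + 2π)`. But `e^{inx} (P - S)(x)` is a polynomial of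
degree `≤ 2n` in `e^{ix}`, so `P - S = 0`, which is absurd.
-/

noncomputable def trigPoly (n : ℕ) (a b : ℕ → ℝ) (x : ℝ) : ℝ :=
  ∑ m ∈ range (n + 1), (a m * cos (m * x) + b m * sin (m * x))

section TrigPoly

variable (n : ℕ) (a b : ℕ → ℝ)

theorem differentiable_trigPoly : Differentiable ℝ (trigPoly n a b) := by
  unfold trigPoly
  fun_prop

theorem continuous_trigPoly : Continuous (trigPoly n a b) :=
  (differentiable_trigPoly n a b).continuous

theorem trigPoly_periodic : Function.Periodic (trigPoly n a b) (2 * π) := by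
  intro x
  simp only [trigPoly, mul_add, cos_add_nat_mul_two_pi, sin_add_nat_mul_two_pi]

theorem trigPoly_zero : trigPoly 0 a b = fun _ => a 0 := by
  ext x
  simp [trigPoly]

theorem trigPoly_neg : trigPoly n (-a) (-b) = -trigPoly n a b := by
  ext x
  simp only [trigPoly, Pi.neg_apply, neg_mul, ← neg_add, sum_neg_distrib]

theorem trigPoly_sub_single {k : ℕ} (hk : k ≤ n) (p q x : ℝ) :
    trigPoly n a b x - (p * cos (k * x) + q * sin (k * x)) =
      trigPoly n (a - Pi.single k p) (b - Pi.single k q) x := by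
  have hk : k ∈ range (n + 1) := mem_range.2 (Nat.lt_succ_of_le hk)
  simp [trigPoly, sub_mul, sum_add_distrib, Pi.single_apply, hk]
  ring

open Polynomial Complex in
noncomputable def trigPolyToPolynomial : ℂ[X] :=
  ∑ m ∈ range (n + 1), (C (a m - b m * I) * X ^ (n + m) + C (a m + b m * I) * X ^ (n - m))

open Polynomial in
theorem natDegree_trigPolyToPolynomial_le : (trigPolyToPolynomial n a b).natDegree ≤ 2 * n := by
  refine natDegree_sum_le_of_forall_le _ _ fun m hm => (natDegree_add_le _ _).trans ?_
  have hm : m ≤ n := Nat.lt_succ_iff.1 (mem_range.1 hm)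
  refine max_le ((natDegree_C_mul_le _ _).trans ?_) ((natDegree_C_mul_le _ _).trans ?_) <;>
    rw [natDegree_X_pow] <;> omega

open Complex in
theorem eval_exp_trigPolyToPolynomial (x : ℝ) :
    (trigPolyToPolynomial n a b).eval (exp (x * I)) = 2 * exp (n * x * I) * trigPoly n a b x := by
  simp only [trigPolyToPolynomial, trigPoly, Polynomial.eval_finsetSum, Polynomial.eval_add,
    Polynomial.eval_mul, Polynomial.eval_C, Polynomial.eval_pow, Polynomial.eval_X]
  push_cast
  rw [mul_sum]
  refine sum_congr rfl fun m hm => ?_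
  have hm : m ≤ n := Nat.lt_succ_iff.1 (mem_range.1 hm)
  rw [← Complex.exp_nat_mul, ← Complex.exp_nat_mul, Nat.cast_add, Nat.cast_sub hm]
  have e₁ : ((n : ℂ) + m) * (x * I) = n * x * I + (m * x : ℂ) * I := by ring
  have e₂ : ((n : ℂ) - m) * (x * I) = n * x * I + (-(m * x : ℂ)) * I := by ring
  rw [e₁, e₂, Complex.exp_add, Complex.exp_add, exp_mul_I ((m : ℂ) * x),
    exp_mul_I (-((m : ℂ) * x)), Complex.cos_neg, Complex.sin_neg]
  linear_combination (-2 * (b m : ℂ) * Complex.sin (m * x) * exp (n * x * I)) * I_sq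

theorem trigPoly_eq_zero_of_two_mul_lt_card {s : Finset ℝ} {t : ℝ}
    (hs : ↑s ⊆ Set.Ico t (t + 2 * π)) (hcard : 2 * n < #s)
    (hzero : ∀ x ∈ s, trigPoly n a b x = 0) (x : ℝ) :
    trigPoly n a b x = 0 := by
  have hinj : Set.InjOn (fun x : ℝ => Complex.exp (x * Complex.I)) s :=
    Subtype.val_injective.comp_injOn ((Circle.exp_injOn_Ico (by linarith)).mono hs)
  have hQ : trigPolyToPolynomial n a b = 0 := by
    refine Polynomial.eq_zero_of_natDegree_lt_card_of_eval_eq_zero' _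
      (s.image fun x : ℝ => Complex.exp (x * Complex.I)) ?_ ?_
    · simp only [mem_image, forall_exists_index, and_imp]
      rintro _ x hx rfl
      simp [eval_exp_trigPolyToPolynomial, hzero x hx]
    · rw [card_image_of_injOn hinj]
      exact (natDegree_trigPolyToPolynomial_le n a b).trans_lt hcard
  have := eval_exp_trigPolyToPolynomial n a b x
  simpa [hQ, Complex.exp_ne_zero] using this.symm

end TrigPoly

theorem exists_mem_Ioo_eq_zero_of_mul_neg {f : ℝ → ℝ} (hf : Continuous f) {x y : ℝ}
    (hxy : x ≤ y) (h : f x * f y < 0) : ∃ z ∈ Set.Ioo x y, f z = 0 := by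
  rcases mul_neg_iff.1 h with ⟨hx, hy⟩ | ⟨hx, hy⟩
  · exact intermediate_value_Ioo' hxy hf.continuousOn ⟨hy, hx⟩
  · exact intermediate_value_Ioo hxy hf.continuousOn ⟨hx, hy⟩

theorem exists_mem_Ioo_eq_zero_of_hasDerivAt_pos {f : ℝ → ℝ} (hf : Continuous f) {d x y : ℝ}
    (hd : HasDerivAt f d x) (hd₀ : 0 < d) (hfx : f x = 0) (hxy : x < y) (hfy : f y < 0) :
    ∃ z ∈ Set.Ioo x y, f z = 0 := by
  obtain ⟨t, hslope, ht⟩ : ∃ t, 0 < t⁻¹ • (f (x + t) - f x) ∧ t ∈ Set.Ioo 0 (y - x) :=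
    ((hd.tendsto_slope_zero_right.eventually (eventually_gt_nhds hd₀)).and
      (Ioo_mem_nhdsGT (by linarith))).exists
  have hft : 0 < f (x + t) := by
    rw [hfx, sub_zero, smul_eq_mul] at hslope
    exact pos_of_mul_pos_right hslope (inv_nonneg.2 ht.1.le)
  obtain ⟨z, hz, hfz⟩ := exists_mem_Ioo_eq_zero_of_mul_neg hf (by linarith [ht.2])
    (mul_neg_of_pos_of_neg hft hfy)
  exact ⟨z, ⟨by linarith [ht.1, hz.1], hz.2⟩, hfz⟩

theorem exists_zeros_of_sign_alternating {R : ℝ → ℝ} (hR : Continuous R) {y : ℕ → ℝ}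
    (hy : Monotone y) (halt : ∀ k, 0 < (-1) ^ k * R (y k)) {ξ d : ℝ}
    (hξ : ξ ∈ Set.Ioo (y 0) (y 1)) (hRξ : R ξ = 0) (hd : HasDerivAt R d ξ) (hd₀ : 0 < d) (N : ℕ) :
    ∃ s : Finset ℝ, ↑s ⊆ Set.Ioo (y 0) (y (N + 1)) ∧ #s = N + 2 ∧ ∀ x ∈ s, R x = 0 := by
  induction N with
  | zero =>
    have hy₁ : R (y 1) < 0 := by simpa using halt 1
    obtain ⟨v, hv, hRv⟩ := exists_mem_Ioo_eq_zero_of_hasDerivAt_pos hR hd hd₀ hRξ hξ.2 hy₁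
    refine ⟨{ξ, v}, ?_, card_pair hv.1.ne, by simp [hRξ, hRv]⟩
    simp only [coe_pair, Set.insert_subset_iff, Set.singleton_subset_iff]
    exact ⟨hξ, hξ.1.trans hv.1, hv.2⟩
  | succ N ih =>
    obtain ⟨s, hs, hcard, hzero⟩ := ih
    have hsign : R (y (N + 1)) * R (y (N + 2)) < 0 := by
      have hpos := mul_pos (halt (N + 1)) (halt (N + 2))
      have hsq : (-1 : ℝ) ^ (N + 1) * (-1) ^ (N + 1) = 1 := by rw [← mul_pow]; norm_num
      rw [pow_succ (-1 : ℝ) (N + 1), mul_neg_one] at hpos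
      linear_combination hpos - R (y (N + 1)) * R (y (N + 2)) * hsq
    obtain ⟨z, hz, hRz⟩ := exists_mem_Ioo_eq_zero_of_mul_neg hR (hy (by omega)) hsign
    have hzs : z ∉ s := fun h => (hs h).2.not_gt hz.1
    refine ⟨insert z s, ?_, by rw [card_insert_of_notMem hzs, hcard], ?_⟩
    · rw [coe_insert, Set.insert_subset_iff]
      refine ⟨⟨(hy (Nat.zero_le _)).trans_lt hz.1, hz.2⟩, hs.trans (Set.Ioo_subset_Ioo_right ?_)⟩
      exact hy (by omega)
    · simpa [hRz] using hzero

theorem deriv_trigPoly_le_of_eq_sinusoid {n : ℕ} (hn : 0 < n) {a b : ℕ → ℝ} {M : ℝ}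
    (hM : ∀ x, |trigPoly n a b x| < M) {c ξ : ℝ} (hξ : n * (ξ - c) ∈ Set.Ioo (-(π / 2)) (π / 2))
    (hfξ : trigPoly n a b ξ = M * sin (n * (ξ - c))) :
    deriv (trigPoly n a b) ξ ≤ n * M * cos (n * (ξ - c)) := by
  have hn₀ : (n : ℝ) ≠ 0 := by positivity
  set R : ℝ → ℝ := fun x => trigPoly n a b x - M * sin (n * (x - c))
  have hR : R = trigPoly n (a - Pi.single n (-(M * sin (n * c))))
      (b - Pi.single n (M * cos (n * c))) := by
    ext x
    rw [← trigPoly_sub_single n a b le_rfl]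
    change trigPoly n a b x - M * sin (n * (x - c)) = _
    rw [mul_sub, sin_sub]
    ring
  have hdR : HasDerivAt R (deriv (trigPoly n a b) ξ - n * M * cos (n * (ξ - c))) ξ := by
    have := ((hasDerivAt_id' ξ).sub_const c).const_mul (n : ℝ) |>.sin |>.const_mul M
    exact ((differentiable_trigPoly n a b ξ).hasDerivAt.sub this).congr_deriv (by ring)
  by_contra! hlt
  set y : ℕ → ℝ := fun k => c + (k * π - π / 2) / n
  have hy : Monotone y := fun k l hkl => by
    simp only [y]
    gcongr
  have hsin : ∀ k : ℕ, sin (n * (y k - c)) = -(-1) ^ k := fun k => by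
    rw [show n * (y k - c) = k * π - π / 2 by simp only [y]; field_simp; ring, sin_sub_pi_div_two,
      cos_nat_mul_pi]
  have halt : ∀ k, 0 < (-1) ^ k * R (y k) := fun k => by
    have := abs_lt.1 (hM (y k))
    rcases neg_one_pow_eq_or ℝ k with h | h <;> simp only [R, hsin, h] <;> linarith
  have hξy : ξ ∈ Set.Ioo (y 0) (y 1) := by
    rw [show ξ = c + n * (ξ - c) / n by field_simp; ring]
    constructor <;> simp only [y] <;> gcongr <;> linarith [hξ.1, hξ.2]
  obtain ⟨s, hs, hcard, hzero⟩ := exists_zeros_of_sign_alternating (hR ▸ continuous_trigPoly _ _ _)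
    hy halt hξy (by simp [R, hfξ]) hdR (by linarith) (2 * n - 1)
  have hy₀ : R (y 0) = 0 := by
    rw [hR]
    refine trigPoly_eq_zero_of_two_mul_lt_card _ _ _ (t := y 0) ?_ (by omega) (hR ▸ hzero) _
    refine hs.trans (Set.Ioo_subset_Ico_self.trans (Set.Ico_subset_Ico_right (le_of_eq ?_)))
    rw [show 2 * n - 1 + 1 = 2 * n by omega]
    simp only [y]
    field_simp
    push_cast
    ring
  simpa [hy₀] using halt 0

theorem deriv_trigPoly_le {n : ℕ} {a b : ℕ → ℝ} {M : ℝ} (hM : ∀ x, |trigPoly n a b x| ≤ M)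
    (ξ : ℝ) : deriv (trigPoly n a b) ξ ≤ n * M := by
  obtain rfl | hn := Nat.eq_zero_or_pos n
  · simp [trigPoly_zero]
  have hn₀ : (0 : ℝ) < n := by exact_mod_cast hn
  rw [← div_le_iff₀' hn₀]
  refine le_of_forall_gt_imp_ge_of_dense fun M' hM' => (div_le_iff₀' hn₀).2 ?_
  have hM'₀ : 0 < M' := ((abs_nonneg _).trans (hM ξ)).trans_lt hM'
  have hratio : |trigPoly n a b ξ / M'| < 1 := by
    rw [abs_div, abs_of_pos hM'₀, div_lt_one hM'₀]
    exact (hM ξ).trans_lt hM'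
  obtain ⟨hlow, hupp⟩ := abs_lt.1 hratio
  set φ := arcsin (trigPoly n a b ξ / M')
  have hφ : n * (ξ - (ξ - φ / n)) = φ := by field_simp; ring
  have hcmp := deriv_trigPoly_le_of_eq_sinusoid hn (fun x => (hM x).trans_lt hM')
    (c := ξ - φ / n)
    (by rw [hφ]; exact ⟨neg_pi_div_two_lt_arcsin.2 hlow, arcsin_lt_pi_div_two.2 hupp⟩)
    (by rw [hφ, sin_arcsin hlow.le hupp.le]; field_simp)
  rw [hφ] at hcmp
  exact hcmp.trans (mul_le_of_le_one_right (by positivity) (cos_le_one φ))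

theorem abs_deriv_trigPoly_le {n : ℕ} {a b : ℕ → ℝ} {M : ℝ} (hM : ∀ x, |trigPoly n a b x| ≤ M)
    (ξ : ℝ) : |deriv (trigPoly n a b) ξ| ≤ n * M := by
  refine abs_le.2 ⟨?_, deriv_trigPoly_le hM ξ⟩
  have := deriv_trigPoly_le (a := -a) (b := -b) (by simpa [trigPoly_neg] using hM) ξ
  rw [trigPoly_neg, deriv.neg'] at this
  linarith

theorem abs_trigPoly_sub_le {n : ℕ} {a b : ℕ → ℝ} {M : ℝ} (hM : ∀ x, |trigPoly n a b x| ≤ M)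
    (x y : ℝ) : |trigPoly n a b y - trigPoly n a b x| ≤ n * M * |y - x| :=
  Convex.norm_image_sub_le_of_norm_deriv_le (fun z _ => differentiable_trigPoly n a b z)
    (fun z _ => abs_deriv_trigPoly_le hM z) convex_univ trivial trivial

theorem stmt9_general (n : ℕ) (α β : ℕ → ℝ)
    (P : ℝ → ℝ)
    (hP : ∀ x : ℝ, P x = ∑ m ∈ range (n+1), (α m * Real.cos (m * x) + β m * Real.sin (m * x)))
    (M : ℝ) (hM : M = ⨆ x : ℝ, |P x|)
    (θ : ℝ) (hθ1 : θ < 1) :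
    ∃ u v : ℝ, (1 - θ) / n ≤ v - u ∧ ∀ x ∈ Set.Icc u v, θ * M ≤ |P x| := by
  obtain rfl : P = trigPoly n α β := funext hP
  obtain ⟨_, hmax⟩ := ((trigPoly_periodic n α β).comp abs |>.compact_of_continuous
    two_pi_pos.ne' (continuous_trigPoly n α β).abs).exists_isGreatest (Set.range_nonempty _)
  obtain ⟨x₀, rfl⟩ := hmax.1
  have hM₀ : M = |trigPoly n α β x₀| := hM.trans hmax.csSup_eq
  have hbound : ∀ x, |trigPoly n α β x| ≤ M := fun x => hM₀ ▸ hmax.2 ⟨x, rfl⟩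
  refine ⟨x₀, x₀ + (1 - θ) / n, by simp, fun x hx => ?_⟩
  have hdist : (x - x₀) * n ≤ 1 - θ :=
    mul_le_of_le_div₀ (by linarith) n.cast_nonneg (by linarith [hx.2])
  have hlip := abs_trigPoly_sub_le hbound x₀ x
  rw [abs_of_nonneg (sub_nonneg.2 hx.1)] at hlip
  have hM_nonneg : 0 ≤ M := hM₀ ▸ abs_nonneg _
  calc θ * M ≤ M - n * M * (x - x₀) := by nlinarith
    _ ≤ |trigPoly n α β x₀| - |trigPoly n α β x - trigPoly n α β x₀| := by linarith
    _ ≤ |trigPoly n α β x| := by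
      linarith [abs_sub_abs_le_abs_sub (trigPoly n α β x₀) (trigPoly n α β x),
        abs_sub_comm (trigPoly n α β x₀) (trigPoly n α β x)]

theorem stmt9 (n : ℕ) (hn : 1 ≤ n) (α β : ℕ → ℝ)
    (P : ℝ → ℝ)
    (hP : ∀ x : ℝ, P x = ∑ m ∈ range (n+1), (α m * Real.cos (m * x) + β m * Real.sin (m * x)))
    (M : ℝ) (hM : M = ⨆ x : ℝ, |P x|)
    (θ : ℝ) (hθ0 : 0 < θ) (hθ1 : θ < 1) :
    ∃ u v : ℝ, (1 - θ) / n ≤ v - u ∧ ∀ x ∈ Set.Icc u v, θ * M ≤ |P x| :=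
  stmt9_general n α β P hP M hM θ hθ1
end

section
/- For every positive integer n, the ratio (Σ_{i=0}^n C(n,i)⁴) / (Σ_{i=0}^n C(n,i)²)² is at most (4/3)·n^{−1/2}. -/
/-!
Every `C(n,i)` is at most the middle coefficient `M = C(n,⌊n/2⌋)`, so
`Σ C(n,i)⁴ ≤ M² Σ C(n,i)² = M² C(2n,n)` and the ratio is at most `M² / C(2n,n)`.
The Wallis-type bounds `(3k+1) C(2k,k)² ≤ 16^k` and `16^k ≤ 4k C(2k,k)²`, each an induction on
`(k+1) C(2k+2,k+1) = 2(2k+1) C(2k,k)`, give `(3n+2) M² ≤ 2·4^n` (for odd `n = 2m+1` through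
`C(2m+2,m+1) = 2 C(2m+1,m)`) and `4^n ≤ 2√n C(2n,n)`. Together they yield
`9n M⁴ ≤ 16 C(2n,n)²`, that is `M² / C(2n,n) ≤ 4 / (3√n)`.
-/

open Finset Real

namespace Nat

theorem sq_mul_centralBinom_succ_sq (n : ℕ) :
    (n + 1) ^ 2 * centralBinom (n + 1) ^ 2 = 4 * (2 * n + 1) ^ 2 * centralBinom n ^ 2 := by
  rw [← mul_pow, succ_mul_centralBinom_succ]; ring

theorem three_mul_add_one_mul_centralBinom_sq_le (n : ℕ) :
    (3 * n + 1) * centralBinom n ^ 2 ≤ 16 ^ n := by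
  induction n with
  | zero => simp
  | succ n ih =>
    refine Nat.le_of_mul_le_mul_left (c := (n + 1) ^ 2) ?_ (by positivity)
    calc (n + 1) ^ 2 * ((3 * (n + 1) + 1) * centralBinom (n + 1) ^ 2)
        = (3 * n + 4) * ((n + 1) ^ 2 * centralBinom (n + 1) ^ 2) := by ring
      _ = 4 * ((3 * n + 4) * (2 * n + 1) ^ 2) * centralBinom n ^ 2 := by
        rw [sq_mul_centralBinom_succ_sq]; ring
      _ ≤ 4 * (4 * (n + 1) ^ 2 * (3 * n + 1)) * centralBinom n ^ 2 :=
        Nat.mul_le_mul_right _ (Nat.mul_le_mul_left _ (by nlinarith))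
      _ = 16 * (n + 1) ^ 2 * ((3 * n + 1) * centralBinom n ^ 2) := by ring
      _ ≤ 16 * (n + 1) ^ 2 * 16 ^ n := Nat.mul_le_mul_left _ ih
      _ = (n + 1) ^ 2 * 16 ^ (n + 1) := by ring

theorem sixteen_pow_le_four_mul_mul_centralBinom_sq {n : ℕ} (hn : 0 < n) :
    16 ^ n ≤ 4 * n * centralBinom n ^ 2 := by
  induction n, hn using Nat.le_induction with
  | base => simp [centralBinom, choose]
  | succ n _ ih =>
    refine Nat.le_of_mul_le_mul_left (c := (n + 1) ^ 2) ?_ (by positivity)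
    calc (n + 1) ^ 2 * 16 ^ (n + 1) = 16 * (n + 1) ^ 2 * 16 ^ n := by ring
      _ ≤ 16 * (n + 1) ^ 2 * (4 * n * centralBinom n ^ 2) := Nat.mul_le_mul_left _ ih
      _ = 16 * (n + 1) * (4 * n * (n + 1)) * centralBinom n ^ 2 := by ring
      _ ≤ 16 * (n + 1) * (2 * n + 1) ^ 2 * centralBinom n ^ 2 :=
        Nat.mul_le_mul_right _ (Nat.mul_le_mul_left _ (by nlinarith))
      _ = 4 * (n + 1) * ((n + 1) ^ 2 * centralBinom (n + 1) ^ 2) := by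
        rw [sq_mul_centralBinom_succ_sq]; ring
      _ = (n + 1) ^ 2 * (4 * (n + 1) * centralBinom (n + 1) ^ 2) := by ring

theorem three_mul_add_two_mul_choose_half_sq_le (n : ℕ) :
    (3 * n + 2) * n.choose (n / 2) ^ 2 ≤ 2 * 4 ^ n := by
  obtain ⟨m, rfl | rfl⟩ := n.even_or_odd'
  · have hm : 2 * m / 2 = m := by omega
    have h16 : 4 ^ (2 * m) = 16 ^ m := by rw [pow_mul]; norm_num
    rw [hm, ← centralBinom_eq_two_mul_choose, h16]
    linarith [three_mul_add_one_mul_centralBinom_sq_le m]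
  · have hm : (2 * m + 1) / 2 = m := by omega
    have hcentral : centralBinom (m + 1) = 2 * (2 * m + 1).choose m := by
      rw [centralBinom_eq_two_mul_choose, show 2 * (m + 1) = 2 * m + 1 + 1 by ring,
        choose_succ_succ, choose_symm_half, ← two_mul]
    have h16 : 16 ^ (m + 1) = 4 * 4 ^ (2 * m + 1) := by
      rw [show 16 = 4 ^ 2 by rfl, ← pow_mul]; ring
    have h := three_mul_add_one_mul_centralBinom_sq_le (m + 1)
    rw [hcentral, h16] at h
    rw [hm]
    nlinarith

theorem nine_mul_mul_choose_half_pow_four_le {n : ℕ} (hn : 0 < n) :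
    9 * n * n.choose (n / 2) ^ 4 ≤ 16 * centralBinom n ^ 2 := by
  have hsq : (3 * n + 2) ^ 2 * n.choose (n / 2) ^ 4 ≤ 16 * n * centralBinom n ^ 2 :=
    calc (3 * n + 2) ^ 2 * n.choose (n / 2) ^ 4 = ((3 * n + 2) * n.choose (n / 2) ^ 2) ^ 2 := by
          ring
      _ ≤ (2 * 4 ^ n) ^ 2 := Nat.pow_le_pow_left (three_mul_add_two_mul_choose_half_sq_le n) 2
      _ = 4 * 16 ^ n := by rw [mul_pow, ← pow_mul, mul_comm n, pow_mul]; norm_num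
      _ ≤ 16 * n * centralBinom n ^ 2 := by
        linarith [sixteen_pow_le_four_mul_mul_centralBinom_sq hn]
  refine Nat.le_of_mul_le_mul_left (c := (3 * n + 2) ^ 2) ?_ (by positivity)
  calc (3 * n + 2) ^ 2 * (9 * n * n.choose (n / 2) ^ 4)
      = 9 * n * ((3 * n + 2) ^ 2 * n.choose (n / 2) ^ 4) := by ring
    _ ≤ 9 * n * (16 * n * centralBinom n ^ 2) := Nat.mul_le_mul_left _ hsq
    _ = 16 * (3 * n) ^ 2 * centralBinom n ^ 2 := by ring
    _ ≤ 16 * (3 * n + 2) ^ 2 * centralBinom n ^ 2 := by gcongr; omega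
    _ = (3 * n + 2) ^ 2 * (16 * centralBinom n ^ 2) := by ring

theorem sum_range_choose_pow_four_le (n : ℕ) :
    ∑ i ∈ range (n + 1), n.choose i ^ 4 ≤ n.choose (n / 2) ^ 2 * centralBinom n := by
  rw [centralBinom_eq_two_mul_choose, ← sum_range_choose_sq, mul_sum]
  refine sum_le_sum fun i _ => ?_
  calc n.choose i ^ 4 = n.choose i ^ 2 * n.choose i ^ 2 := by ring
    _ ≤ n.choose (n / 2) ^ 2 * n.choose i ^ 2 := by gcongr; exact choose_le_middle i n

end Nat

theorem div_le_four_div_three_mul_rpow_neg_half {a b x : ℝ} (ha : 0 ≤ a) (hb : 0 < b)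
    (hx : 0 < x) (h : 9 * x * a ^ 2 ≤ 16 * b ^ 2) : a / b ≤ 4 / 3 * x ^ (-(1 / 2) : ℝ) := by
  have hsa : 3 * √x * a ≤ 4 * b := by
    refine (pow_le_pow_iff_left₀ (by positivity) (by positivity) two_ne_zero).1 ?_
    calc (3 * √x * a) ^ 2 = 9 * x * a ^ 2 := by rw [mul_pow, mul_pow, sq_sqrt hx.le]; ring
      _ ≤ (4 * b) ^ 2 := by linarith
  rw [rpow_neg hx.le, ← sqrt_eq_rpow, div_le_iff₀ hb]
  field_simp
  linarith

theorem stmt11 (n : ℕ) (hn : 0 < n) :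
    (∑ i ∈ range (n+1), (n.choose i : ℝ)^4) / (∑ i ∈ range (n+1), (n.choose i : ℝ)^2)^2
      ≤ 4/3 * (n : ℝ) ^ (-(1/2) : ℝ) := by
  have hD : (0 : ℝ) < n.centralBinom := by exact_mod_cast n.centralBinom_pos
  have hsq : ∑ i ∈ range (n + 1), (n.choose i : ℝ) ^ 2 = n.centralBinom := by
    rw [Nat.centralBinom_eq_two_mul_choose, ← Nat.sum_range_choose_sq]; push_cast; rfl
  have hfour : ∑ i ∈ range (n + 1), (n.choose i : ℝ) ^ 4
      ≤ (n.choose (n / 2) : ℝ) ^ 2 * n.centralBinom := by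
    exact_mod_cast Nat.sum_range_choose_pow_four_le n
  have hkey :
      9 * (n : ℝ) * ((n.choose (n / 2) : ℝ) ^ 2) ^ 2 ≤ 16 * (n.centralBinom : ℝ) ^ 2 := by
    rw [← pow_mul]; exact_mod_cast Nat.nine_mul_mul_choose_half_pow_four_le hn
  rw [hsq]
  calc _ ≤ (n.choose (n / 2) : ℝ) ^ 2 * n.centralBinom / (n.centralBinom : ℝ) ^ 2 := by gcongr
    _ = (n.choose (n / 2) : ℝ) ^ 2 / n.centralBinom := by field_simp
    _ ≤ _ :=
      div_le_four_div_three_mul_rpow_neg_half (by positivity) hD (by exact_mod_cast hn) hkey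
end
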